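/- For discrete random variables U₁, U₂, U₃ taking values in the integers (or an abelian group), with U₁, U₂, U₃ mutually independent and all entropies finite, H(U₂) + H(U₁ + U₂ + U₃) ≤ H(U₁ + U₂) + H(U₂ + U₃). -/

import Mathlib

open MeasureTheory ProbabilityTheory

section EntropySubmodAux
open Finset Real

section Aux
variable {G : Type*} [Fintype G] [AddCommGroup G]

noncomputable def cvE (p q : G → ℝ) (s : G) : ℝ := ∑ x, p x * q (s - x)

lemma sum_shiftE (q : G → ℝ) (x : G) : ∑ s, q (s - x) = ∑ s, q s :=
  Fintype.sum_equiv (Equiv.subRight x) _ _ (fun _ => rfl)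

lemma cvE_nonneg {p q : G → ℝ} (hp : ∀ a, 0 ≤ p a) (hq : ∀ a, 0 ≤ q a) (s : G) :
    0 ≤ cvE p q s :=
  Finset.sum_nonneg fun x _ => mul_nonneg (hp x) (hq _)

lemma sum_cvE (p q : G → ℝ) : ∑ s, cvE p q s = (∑ x, p x) * (∑ s, q s) := by
  unfold cvE
  rw [Finset.sum_comm, Finset.sum_mul]
  exact Finset.sum_congr rfl fun x _ => by rw [← Finset.mul_sum, sum_shiftE]

lemma cvE_assoc (p q r : G → ℝ) (s : G) : cvE (cvE p q) r s = cvE p (cvE q r) s := by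
  unfold cvE
  simp only [Finset.sum_mul, Finset.mul_sum]
  rw [Finset.sum_comm]
  refine Finset.sum_congr rfl fun a _ => ?_
  refine Fintype.sum_equiv (Equiv.subRight a) _ _ fun t => ?_
  simp only [Equiv.subRight_apply]
  rw [sub_sub_sub_cancel_right]
  ring_nf
end Aux

lemma logsumE {ι : Type*} (s : Finset ι) (u v : ι → ℝ) (hu : ∀ i ∈ s, 0 ≤ u i)
    (hv : ∀ i ∈ s, 0 ≤ v i) (h0 : ∀ i ∈ s, v i = 0 → u i = 0) :
    (∑ i ∈ s, u i) * (Real.log (∑ i ∈ s, u i) - Real.log (∑ i ∈ s, v i)) ≤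
      ∑ i ∈ s, u i * (Real.log (u i) - Real.log (v i)) := by
  set U := ∑ i ∈ s, u i with hUdef
  set V := ∑ i ∈ s, v i with hVdef
  rcases eq_or_lt_of_le (Finset.sum_nonneg hv : (0:ℝ) ≤ V) with hV | hV
  · have hz : ∀ i ∈ s, u i = 0 := fun i hi =>
      h0 i hi ((Finset.sum_eq_zero_iff_of_nonneg hv).mp hV.symm i hi)
    have hU : U = 0 := Finset.sum_eq_zero hz
    rw [hU, zero_mul]
    exact le_of_eq (Finset.sum_eq_zero fun i hi => by rw [hz i hi, zero_mul]).symm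
  · have hVne : V ≠ 0 := ne_of_gt hV
    have jensen := convexOn_mul_log.map_sum_le (t := s) (w := fun i => v i / V)
      (p := fun i => u i / v i)
      (fun i hi => div_nonneg (hv i hi) hV.le)
      (by rw [← Finset.sum_div, div_self hVne])
      (fun i hi => Set.mem_Ici.mpr (div_nonneg (hu i hi) (hv i hi)))
    have hmean : ∑ i ∈ s, (v i / V) • (u i / v i) = U / V := by
      rw [hUdef, Finset.sum_div]
      refine Finset.sum_congr rfl fun i hi => ?_
      rcases eq_or_lt_of_le (hv i hi) with h | h
      · rw [h0 i hi h.symm, ← h]; simp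
      · simp only [smul_eq_mul]; field_simp
    rw [hmean] at jensen
    have key := mul_le_mul_of_nonneg_left jensen hV.le
    calc U * (Real.log U - Real.log V) = V * (U / V * Real.log (U / V)) := by
          rcases eq_or_lt_of_le (Finset.sum_nonneg hu : (0:ℝ) ≤ U) with hU | hU
          · have hU0 : U = 0 := by rw [hUdef, ← hU]
            rw [hU0]; simp
          · rw [Real.log_div (ne_of_gt hU) hVne]; field_simp; rfl
      _ ≤ V * ∑ i ∈ s, (v i / V) • ((fun x => x * Real.log x) (u i / v i)) := key
      _ = ∑ i ∈ s, u i * (Real.log (u i) - Real.log (v i)) := by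
          rw [Finset.mul_sum]
          refine Finset.sum_congr rfl fun i hi => ?_
          rcases eq_or_lt_of_le (hv i hi) with h | h
          · rw [h0 i hi h.symm, ← h]; simp
          · rcases eq_or_lt_of_le (hu i hi) with h' | h'
            · rw [← h']; simp
            · simp only [smul_eq_mul]
              rw [Real.log_div (ne_of_gt h') (ne_of_gt h)]
              field_simp

section Aux2
variable {G : Type*} [Fintype G] [AddCommGroup G]

noncomputable def HfE (f : G → ℝ) : ℝ := ∑ s, Real.negMulLog (f s)

lemma ent_diffE (p q : G → ℝ) (hp1 : ∑ a, p a = 1) :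
    HfE (cvE p q) - HfE q
      = ∑ x, ∑ s, p x * q (s - x) * (Real.log (q (s - x)) - Real.log (cvE p q s)) := by
  have h1 : ∑ x, ∑ s, p x * q (s - x) * Real.log (q (s - x)) = - HfE q := by
    unfold HfE
    rw [← Finset.sum_neg_distrib]
    calc ∑ x, ∑ s, p x * q (s - x) * Real.log (q (s - x))
        = ∑ x, p x * ∑ s, q s * Real.log (q s) := by
          refine Finset.sum_congr rfl fun x _ => ?_
          rw [Finset.mul_sum]
          exact Fintype.sum_equiv (Equiv.subRight x) _ _ fun s => by
            simp only [Equiv.subRight_apply]; ring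
      _ = ∑ s, q s * Real.log (q s) := by rw [← Finset.sum_mul, hp1, one_mul]
      _ = ∑ s, -Real.negMulLog (q s) := by
          refine Finset.sum_congr rfl fun s _ => ?_
          rw [Real.negMulLog]; ring
  have h2 : ∑ x, ∑ s, p x * q (s - x) * Real.log (cvE p q s) = - HfE (cvE p q) := by
    unfold HfE
    rw [Finset.sum_comm, ← Finset.sum_neg_distrib]
    refine Finset.sum_congr rfl fun s _ => ?_
    rw [Real.negMulLog]
    have : ∑ x, p x * q (s - x) * Real.log (cvE p q s)
        = (∑ x, p x * q (s - x)) * Real.log (cvE p q s) := by rw [Finset.sum_mul]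
    rw [this]; unfold cvE; ring
  have h3 : ∀ x s : G, p x * q (s - x) * (Real.log (q (s - x)) - Real.log (cvE p q s))
      = p x * q (s - x) * Real.log (q (s - x)) - p x * q (s - x) * Real.log (cvE p q s) :=
    fun x s => by ring
  simp only [h3, Finset.sum_sub_distrib]
  rw [h1, h2]; ring
end Aux2

section Aux3
variable {G : Type*} [Fintype G] [AddCommGroup G]

lemma coreE (p q r : G → ℝ) (hp : ∀ a, 0 ≤ p a) (hq : ∀ a, 0 ≤ q a) (hr : ∀ a, 0 ≤ r a)
    (hr1 : ∑ t, r t = 1) :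
    ∑ x, ∑ t, p x * cvE q r (t - x) * (Real.log (cvE q r (t - x)) - Real.log (cvE p (cvE q r) t))
      ≤ ∑ x, ∑ s, p x * q (s - x) * (Real.log (q (s - x)) - Real.log (cvE p q s)) := by
  refine Finset.sum_le_sum fun x _ => ?_
  rcases eq_or_lt_of_le (hp x) with hx | hx
  · rw [← hx]; simp
  · -- rewrite RHS
    have hRHS : ∑ s, p x * q (s - x) * (Real.log (q (s - x)) - Real.log (cvE p q s))
        = ∑ t, ∑ s, p x * (q (s - x) * r (t - s)) *
            (Real.log (q (s - x)) - Real.log (cvE p q s)) := by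
      rw [Finset.sum_comm]
      refine Finset.sum_congr rfl fun s _ => ?_
      have : ∑ t, p x * (q (s - x) * r (t - s)) * (Real.log (q (s - x)) - Real.log (cvE p q s))
          = (∑ t, r (t - s)) * (p x * q (s - x) * (Real.log (q (s - x)) - Real.log (cvE p q s))) := by
        rw [Finset.sum_mul]
        exact Finset.sum_congr rfl fun t _ => by ring
      rw [this, sum_shiftE, hr1, one_mul]
    rw [hRHS]
    refine Finset.sum_le_sum fun t _ => ?_
    -- per (x,t): apply log-sum
    set u : G → ℝ := fun s => q (s - x) * r (t - s) with hu_def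
    set v : G → ℝ := fun s => cvE p q s * r (t - s) with hv_def
    have hu : ∀ s ∈ Finset.univ (α := G), 0 ≤ u s := fun s _ => mul_nonneg (hq _) (hr _)
    have hv : ∀ s ∈ Finset.univ (α := G), 0 ≤ v s :=
      fun s _ => mul_nonneg (cvE_nonneg hp hq s) (hr _)
    have h0 : ∀ s ∈ Finset.univ (α := G), v s = 0 → u s = 0 := by
      intro s _ hvs
      rcases mul_eq_zero.mp hvs with h | h
      · have := (Finset.sum_eq_zero_iff_of_nonneg
          (fun y _ => mul_nonneg (hp y) (hq (s - y)))).mp h x (Finset.mem_univ x)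
        have hqs : q (s - x) = 0 := by
          rcases mul_eq_zero.mp this with h' | h'
          · exact absurd h' (ne_of_gt hx)
          · exact h'
        simp [hu_def, hqs]
      · simp [hu_def, h]
    have hU : ∑ s, u s = cvE q r (t - x) := by
      unfold cvE
      refine (Fintype.sum_equiv (Equiv.subRight x) _ _ fun s => ?_).symm.symm
      simp only [Equiv.subRight_apply, hu_def]
      rw [sub_sub_sub_cancel_right]
    have hV : ∑ s, v s = cvE p (cvE q r) t := by
      rw [← cvE_assoc]; rfl
    have key := logsumE Finset.univ u v hu hv h0
    rw [hU, hV] at key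
    have key2 := mul_le_mul_of_nonneg_left key hx.le
    rw [mul_assoc]
    refine key2.trans_eq ?_
    rw [Finset.mul_sum]
    refine Finset.sum_congr rfl fun s _ => ?_
    rcases eq_or_lt_of_le (hq (s - x)) with hqs | hqs
    · simp [hu_def, ← hqs]
    · rcases eq_or_lt_of_le (hr (t - s)) with hrs | hrs
      · simp [hu_def, hv_def, ← hrs]
      · have hα : 0 < cvE p q s := by
          have h1 : p x * q (s - x) ≤ cvE p q s :=
            Finset.single_le_sum (f := fun y => p y * q (s - y))
              (fun y _ => mul_nonneg (hp y) (hq _)) (Finset.mem_univ x)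
          exact lt_of_lt_of_le (mul_pos hx hqs) h1
        simp only [hu_def, hv_def]
        rw [Real.log_mul (ne_of_gt hqs) (ne_of_gt hrs),
          Real.log_mul (ne_of_gt hα) (ne_of_gt hrs)]
        ring
end Aux3

section Aux4
variable {G : Type*} [Fintype G] [AddCommGroup G]

lemma pure_mainE (p q r : G → ℝ) (hp : ∀ a, 0 ≤ p a) (hq : ∀ a, 0 ≤ q a) (hr : ∀ a, 0 ≤ r a)
    (hp1 : ∑ a, p a = 1) (hr1 : ∑ a, r a = 1) :
    HfE q + HfE (cvE p (cvE q r)) ≤ HfE (cvE p q) + HfE (cvE q r) := by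
  have hA := ent_diffE p q hp1
  have hB := ent_diffE p (cvE q r) hp1
  have hC := coreE p q r hp hq hr hr1
  linarith
end Aux4

end EntropySubmodAux

/-- Shannon entropy (natural log) of a discrete random variable with values
in a finite type. -/
noncomputable def Hent {Ω S : Type*} [MeasurableSpace Ω] [Fintype S]
    (μ : Measure Ω) (X : Ω → S) : ℝ :=
  ∑ s : S, Real.negMulLog (μ (X ⁻¹' {s})).toReal

theorem entropy_submodular_indep {Ω G : Type*} [MeasurableSpace Ω]
    [Fintype G] [AddCommGroup G] [MeasurableSpace G] [MeasurableSingletonClass G]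
    (μ : Measure Ω) [IsProbabilityMeasure μ]
    (U1 U2 U3 : Ω → G) (hm1 : Measurable U1) (hm2 : Measurable U2) (hm3 : Measurable U3)
    (hindep : iIndepFun ![U1, U2, U3] μ) :
    Hent μ U2 + Hent μ (fun ω => U1 ω + U2 ω + U3 ω) ≤
      Hent μ (fun ω => U1 ω + U2 ω) + Hent μ (fun ω => U2 ω + U3 ω) := by
  classical
  set p : G → ℝ := fun a => (μ (U1 ⁻¹' {a})).toReal with hp_def
  set q : G → ℝ := fun a => (μ (U2 ⁻¹' {a})).toReal with hq_def
  set r : G → ℝ := fun a => (μ (U3 ⁻¹' {a})).toReal with hr_def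
  -- sums to one
  have hsum1 : ∀ (X : Ω → G), Measurable X → ∑ a, ((μ (X ⁻¹' {a})).toReal) = 1 := by
    intro X hmX
    have h1 : ∑ a, μ (X ⁻¹' {a}) = 1 := by
      rw [sum_measure_preimage_singleton _ (fun a _ => hmX (measurableSet_singleton a))]
      simp
    rw [← ENNReal.toReal_sum (fun a _ => measure_ne_top μ _), h1, ENNReal.toReal_one]
  have hp1 : ∑ a, p a = 1 := hsum1 U1 hm1
  have hq1 : ∑ a, q a = 1 := hsum1 U2 hm2
  have hr1 : ∑ a, r a = 1 := hsum1 U3 hm3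
  -- independence facts
  have h12 : IndepFun U1 U2 μ := by
    have := hindep.indepFun (i := 0) (j := 1) (by decide)
    simpa using this
  have h23 : IndepFun U2 U3 μ := by
    have := hindep.indepFun (i := 1) (j := 2) (by decide)
    simpa using this
  have htriple : ∀ a b c : G, μ (U1 ⁻¹' {a} ∩ U2 ⁻¹' {b} ∩ U3 ⁻¹' {c})
      = μ (U1 ⁻¹' {a}) * μ (U2 ⁻¹' {b}) * μ (U3 ⁻¹' {c}) := by
    intro a b c
    have h := hindep.measure_inter_preimage_eq_mul (S := Finset.univ)
      (sets := ![{a}, {b}, {c}]) (fun i _ => by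
        fin_cases i <;> simp [measurableSet_singleton])
    have hL : (⋂ i ∈ (Finset.univ : Finset (Fin 3)), (![U1, U2, U3] i) ⁻¹' (![{a}, {b}, {c}] i))
        = U1 ⁻¹' {a} ∩ U2 ⁻¹' {b} ∩ U3 ⁻¹' {c} := by
      ext ω
      simp [Fin.forall_fin_succ, and_assoc]
    rw [hL, Fin.prod_univ_three] at h
    simpa using h
  -- pair distribution
  have hpair : ∀ (X Y : Ω → G), Measurable X → Measurable Y → IndepFun X Y μ → ∀ s : G,
      (μ ((fun ω => X ω + Y ω) ⁻¹' {s})).toReal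
        = ∑ a, (μ (X ⁻¹' {a})).toReal * (μ (Y ⁻¹' {s - a})).toReal := by
    intro X Y hmX hmY hXY s
    have hset : (fun ω => X ω + Y ω) ⁻¹' {s} = ⋃ a : G, (X ⁻¹' {a} ∩ Y ⁻¹' {s - a}) := by
      ext ω
      simp only [Set.mem_preimage, Set.mem_singleton_iff, Set.mem_iUnion, Set.mem_inter_iff]
      constructor
      · intro h
        exact ⟨X ω, rfl, by rw [← h]; abel⟩
      · rintro ⟨a, h1, h2⟩
        rw [h1, h2]; abel
    have hdisj : Pairwise (Function.onFun Disjoint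
        (fun a : G => X ⁻¹' {a} ∩ Y ⁻¹' {s - a})) := by
      intro a a' haa'
      refine Set.disjoint_left.mpr ?_
      rintro ω ⟨h1, _⟩ ⟨h1', _⟩
      exact haa' (h1.symm.trans h1')
    have hmeas : ∀ a : G, MeasurableSet (X ⁻¹' {a} ∩ Y ⁻¹' {s - a}) :=
      fun a => (hmX (measurableSet_singleton a)).inter (hmY (measurableSet_singleton _))
    rw [hset, measure_iUnion hdisj hmeas, tsum_fintype,
      ENNReal.toReal_sum (fun a _ => measure_ne_top μ _)]
    refine Finset.sum_congr rfl fun a _ => ?_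
    rw [hXY.measure_inter_preimage_eq_mul _ _ (measurableSet_singleton _)
      (measurableSet_singleton _), ENNReal.toReal_mul]
  have htrip : ∀ s : G, (μ ((fun ω => U1 ω + U2 ω + U3 ω) ⁻¹' {s})).toReal
      = ∑ ab : G × G, p ab.1 * q ab.2 * r (s - ab.1 - ab.2) := by
    intro s
    have hset : (fun ω => U1 ω + U2 ω + U3 ω) ⁻¹' {s}
        = ⋃ ab : G × G, (U1 ⁻¹' {ab.1} ∩ U2 ⁻¹' {ab.2} ∩ U3 ⁻¹' {s - ab.1 - ab.2}) := by
      ext ω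
      simp only [Set.mem_preimage, Set.mem_singleton_iff, Set.mem_iUnion, Set.mem_inter_iff]
      constructor
      · intro h
        exact ⟨(U1 ω, U2 ω), ⟨rfl, rfl⟩, by rw [← h]; abel⟩
      · rintro ⟨ab, ⟨h1, h2⟩, h3⟩
        rw [h1, h2, h3]; abel
    have hdisj : Pairwise (Function.onFun Disjoint
        (fun ab : G × G => U1 ⁻¹' {ab.1} ∩ U2 ⁻¹' {ab.2} ∩ U3 ⁻¹' {s - ab.1 - ab.2})) := by
      intro ab ab' h
      refine Set.disjoint_left.mpr ?_
      rintro ω ⟨⟨h1, h2⟩, _⟩ ⟨⟨h1', h2'⟩, _⟩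
      exact h (Prod.ext (h1.symm.trans h1') (h2.symm.trans h2'))
    have hmeas : ∀ ab : G × G,
        MeasurableSet (U1 ⁻¹' {ab.1} ∩ U2 ⁻¹' {ab.2} ∩ U3 ⁻¹' {s - ab.1 - ab.2}) :=
      fun ab => ((hm1 (measurableSet_singleton _)).inter
        (hm2 (measurableSet_singleton _))).inter (hm3 (measurableSet_singleton _))
    rw [hset, measure_iUnion hdisj hmeas, tsum_fintype,
      ENNReal.toReal_sum (fun a _ => measure_ne_top μ _)]
    refine Finset.sum_congr rfl fun ab _ => ?_
    rw [htriple, ENNReal.toReal_mul, ENNReal.toReal_mul]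
  have e2 : Hent μ U2 = HfE q := rfl
  have e12 : Hent μ (fun ω => U1 ω + U2 ω) = HfE (cvE p q) := by
    unfold Hent HfE
    refine Finset.sum_congr rfl fun s _ => ?_
    rw [hpair U1 U2 hm1 hm2 h12 s]; rfl
  have e23 : Hent μ (fun ω => U2 ω + U3 ω) = HfE (cvE q r) := by
    unfold Hent HfE
    refine Finset.sum_congr rfl fun s _ => ?_
    rw [hpair U2 U3 hm2 hm3 h23 s]; rfl
  have e123 : Hent μ (fun ω => U1 ω + U2 ω + U3 ω) = HfE (cvE p (cvE q r)) := by
    unfold Hent HfE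
    refine Finset.sum_congr rfl fun s _ => ?_
    rw [htrip s]
    congr 1
    rw [Fintype.sum_prod_type]
    unfold cvE
    refine Finset.sum_congr rfl fun a _ => ?_
    rw [Finset.mul_sum]
    refine Finset.sum_congr rfl fun b _ => ?_
    ring
  rw [e2, e12, e23, e123]
  exact pure_mainE p q r (fun a => ENNReal.toReal_nonneg) (fun a => ENNReal.toReal_nonneg)
    (fun a => ENNReal.toReal_nonneg) hp1 hr1
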